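/- arXiv:2504.19817 — 3 statements merged into one kernel-verified Lean document; each statement's English description precedes it below -/
import Mathlib

section
/- Let N = 4 and α > −2. Then there exist constants M > 0 and ε₀ > 0 such that for all ε ∈ (0, ε₀): ∫_Ω U_{ε,α}² log(U_{ε,α}²) ≥ C_{α,4}²·ω₄·log( C_{α,4}²·ρ²·e^{−8/(2+α)²} / (2ρ)⁴ )·ε²·log(1/ε) − M·ε². -/
open MeasureTheory Metric Set Filter

noncomputable section

abbrev Euc (N : ℕ) := EuclideanSpace ℝ (Fin N)

/-- The domain: unit ball if `0 ≤ α`, punctured unit ball if `α < 0`. -/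
def Omega (N : ℕ) (α : ℝ) : Set (Euc N) :=
  if 0 ≤ α then Metric.ball 0 1 else Metric.ball 0 1 \ {0}

/-- The critical exponent `2*_α = 2(N+α)/(N-2)`. -/
def critExp (N : ℕ) (α : ℝ) : ℝ := 2 * ((N : ℝ) + α) / ((N : ℝ) - 2)

/-- A function is radial if it only depends on the norm. -/
def IsRadial {N : ℕ} (u : Euc N → ℝ) : Prop := ∀ x y : Euc N, ‖x‖ = ‖y‖ → u x = u y

/-- The Laplacian, as the sum of the second derivatives in coordinate directions. -/
def laplacian {N : ℕ} (u : Euc N → ℝ) (x : Euc N) : ℝ :=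
  ∑ i : Fin N, fderiv ℝ (fun y => fderiv ℝ u y (EuclideanSpace.single i 1)) x
    (EuclideanSpace.single i 1)

/-- The energy functional `I`. -/
def energy (N : ℕ) (α lam mu : ℝ) (u : Euc N → ℝ) : ℝ :=
  (1 / 2) * (∫ x in Omega N α, ‖fderiv ℝ u x‖ ^ 2)
    - (1 / critExp N α) * (∫ x in Omega N α, ‖x‖ ^ α * (max (u x) 0) ^ critExp N α)
    - (lam / 2) * (∫ x in Omega N α, (max (u x) 0) ^ 2)
    - (mu / 2) * (∫ x in Omega N α, (max (u x) 0) ^ 2 * (Real.log ((max (u x) 0) ^ 2) - 1))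

/-- Smooth compactly supported test functions in `Ω`. -/
def TestFun (N : ℕ) (α : ℝ) (v : Euc N → ℝ) : Prop :=
  ContDiff ℝ (⊤ : ℕ∞) v ∧ HasCompactSupport v ∧ tsupport v ⊆ Omega N α

/-- The first Dirichlet eigenvalue of `-Δ` on the unit ball. -/
def lambda1 (N : ℕ) : ℝ :=
  sInf ((fun v : Euc N → ℝ =>
      (∫ x in Metric.ball (0 : Euc N) 1, ‖fderiv ℝ v x‖ ^ 2) /
        ∫ x in Metric.ball (0 : Euc N) 1, (v x) ^ 2) ''
    {v | ContDiff ℝ (⊤ : ℕ∞) v ∧ HasCompactSupport v ∧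
      tsupport v ⊆ Metric.ball (0 : Euc N) 1 ∧ v ≠ 0})

/-- The best constant `S_α` in the Hardy–Sobolev inequality for radial functions. -/
def Sconst (N : ℕ) (α : ℝ) : ℝ :=
  sInf ((fun v : Euc N → ℝ =>
      (∫ x, ‖fderiv ℝ v x‖ ^ 2) /
        (∫ x, ‖x‖ ^ α * |v x| ^ critExp N α) ^ (2 / critExp N α)) ''
    {v | ContDiff ℝ (⊤ : ℕ∞) v ∧ HasCompactSupport v ∧ IsRadial v ∧ v ≠ 0})

/-- The parameter region `B₀`. -/
def B0 (N : ℕ) (α : ℝ) : Set (ℝ × ℝ) :=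
  {p | 0 ≤ p.1 ∧ p.1 < lambda1 N ∧ p.2 < 0 ∧
    0 < ((α + 2) / (2 * ((N : ℝ) + α))) *
        ((lambda1 N - p.1) / lambda1 N) ^ (((N : ℝ) + α) / (α + 2)) *
        Sconst N α ^ (((N : ℝ) + α) / (α + 2)) +
      (p.2 / 2) * (volume (Omega N α)).toReal}

/-- The parameter region `C₀`. -/
def C0 (N : ℕ) (α : ℝ) : Set (ℝ × ℝ) :=
  {p | p.2 < 0 ∧
    0 < ((α + 2) / (2 * ((N : ℝ) + α))) * Sconst N α ^ (((N : ℝ) + α) / (α + 2)) +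
      (p.2 / 2) * Real.exp (-(p.1 / p.2)) * (volume (Omega N α)).toReal}

/-- The extremal (Aubin–Talenti type) bubble `u_{ε,α}`. -/
def bubbleFn (N : ℕ) (α ε : ℝ) (x : Euc N) : ℝ :=
  (((N : ℝ) + α) * ((N : ℝ) - 2)) ^ (((N : ℝ) - 2) / (2 * (α + 2))) * ε ^ (((N : ℝ) - 2) / 2) *
    (ε ^ (α + 2) + ‖x‖ ^ (α + 2)) ^ (-(((N : ℝ) - 2) / (α + 2)))

/-- The normalizing constant `C_{α,N}`. -/
def Cconst (N : ℕ) (α : ℝ) : ℝ := (((N : ℝ) + α) * ((N : ℝ) - 2)) ^ (((N : ℝ) - 2) / (2 * (α + 2)))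

/-- Surface measure of the unit sphere in `ℝ^N`, as `N·vol(B₁)`. -/
def omegaN (N : ℕ) : ℝ := (N : ℝ) * (volume (Metric.ball (0 : Euc N) 1)).toReal

end


noncomputable section
/-- radial profile of the squared bubble -/
def Wfun (α C ε r : ℝ) : ℝ := C^2 * ε^2 * (ε^(α+2) + r^(α+2)) ^ (-(4/(α+2)))

/-- truncated lower-bound profile -/
def ffun (α C ρ ε r : ℝ) : ℝ :=
  if r ≤ 2*ρ then Wfun α C ε r * (Real.log (Wfun α C ε r) - (Real.exp 1)⁻¹) else 0
end

section basiclemmas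
variable {α C ρ ε : ℝ}

lemma basepos (hα : -2 < α) (hε0 : 0 < ε) {r : ℝ} (hr : 0 ≤ r) :
    0 < ε^(α+2) + r^(α+2) :=
  add_pos_of_pos_of_nonneg (Real.rpow_pos_of_pos hε0 _) (Real.rpow_nonneg hr _)

lemma Wpos (hα : -2 < α) (hC : 0 < C) (hε0 : 0 < ε) {r : ℝ} (hr : 0 ≤ r) :
    0 < Wfun α C ε r := by
  unfold Wfun
  exact mul_pos (by positivity) (Real.rpow_pos_of_pos (basepos hα hε0 hr) _)

lemma Wle_one (hα : -2 < α) (hC : 0 < C) (hε0 : 0 < ε) (hρ0 : 0 < ρ)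
    (hεC : C * ε ≤ ρ^2) {r : ℝ} (hr : ρ ≤ r) : Wfun α C ε r ≤ 1 := by
  have hb : 0 < α + 2 := by linarith
  have hrpos : 0 < r := lt_of_lt_of_le hρ0 hr
  have h1 : (ε^(α+2) + r^(α+2)) ^ (-(4/(α+2))) ≤ (r^(α+2)) ^ (-(4/(α+2))) :=
    Real.rpow_le_rpow_of_nonpos (Real.rpow_pos_of_pos hrpos _)
      (le_add_of_nonneg_left (Real.rpow_nonneg hε0.le _))
      (neg_nonpos.2 (div_nonneg (by norm_num) hb.le))
  have h2 : (r^(α+2)) ^ (-(4/(α+2))) = r ^ (-(4:ℝ)) := by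
    rw [← Real.rpow_mul hrpos.le]; congr 1; field_simp
  have h3 : r ^ (-(4:ℝ)) ≤ ρ ^ (-(4:ℝ)) :=
    Real.rpow_le_rpow_of_nonpos hρ0 hr (by norm_num)
  have h5 : ρ ^ (-(4:ℝ)) = (ρ^4)⁻¹ := by
    rw [Real.rpow_neg hρ0.le, show ((4:ℝ)) = ((4:ℕ):ℝ) by norm_num, Real.rpow_natCast]
  have h4 : C^2 * ε^2 ≤ ρ^4 := by nlinarith [sq_nonneg (C*ε - ρ^2), mul_pos hC hε0, sq_nonneg ρ]
  have hρ4 : (0:ℝ) < ρ^4 := by positivity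
  calc Wfun α C ε r ≤ C^2*ε^2 * (ρ^4)⁻¹ := by
        unfold Wfun
        refine mul_le_mul_of_nonneg_left ?_ (by positivity)
        rw [← h5]; exact le_trans h1 (h2 ▸ h3)
    _ ≤ ρ^4 * (ρ^4)⁻¹ := by
        exact mul_le_mul_of_nonneg_right h4 (by positivity)
    _ = 1 := mul_inv_cancel₀ hρ4.ne'

end basiclemmas

lemma log_le_div_e {s : ℝ} (hs : 0 < s) : Real.log s ≤ s * (Real.exp 1)⁻¹ := by
  have h := Real.log_le_sub_one_of_pos (mul_pos hs (inv_pos.2 (Real.exp_pos 1)))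
  rw [Real.log_mul hs.ne' (inv_ne_zero (Real.exp_pos 1).ne'), Real.log_inv, Real.log_exp] at h
  linarith

lemma neg_inv_e_le_mul_log {t : ℝ} (ht : 0 ≤ t) : -(Real.exp 1)⁻¹ ≤ t * Real.log t := by
  rcases eq_or_lt_of_le ht with h | h
  · simp [← h]; positivity
  · have h2 := log_le_div_e (s := t⁻¹) (by positivity)
    rw [Real.log_inv] at h2
    have : t * -Real.log t ≤ t * (t⁻¹ * (Real.exp 1)⁻¹) :=
      mul_le_mul_of_nonneg_left h2 ht
    rw [← mul_assoc, mul_inv_cancel₀ h.ne', one_mul] at this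
    linarith

lemma mul_log_ge {t w : ℝ} (ht0 : 0 ≤ t) (ht1 : t ≤ 1) (hw : 0 < w)
    (h : t = 1 ∨ Real.log w ≤ 0) :
    w * (Real.log w - (Real.exp 1)⁻¹) ≤ t * w * Real.log (t * w) := by
  rcases eq_or_lt_of_le ht0 with h0 | h0
  · have hlw : Real.log w ≤ 0 := by
      rcases h with h | h
      · exfalso; rw [← h0] at h; norm_num at h
      · exact h
    have he : 0 < (Real.exp 1)⁻¹ := inv_pos.2 (Real.exp_pos 1)
    rw [← h0]
    simp only [zero_mul]
    nlinarith
  · rw [Real.log_mul h0.ne' hw.ne']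
    have h1 : -(Real.exp 1)⁻¹ ≤ t * Real.log t := neg_inv_e_le_mul_log ht0
    have h2 : 0 ≤ (t - 1) * Real.log w := by
      rcases h with h | h
      · simp [h]
      · nlinarith
    nlinarith [mul_nonneg hw.le h2, mul_le_mul_of_nonneg_left h1 hw.le]

section pointwise
variable {α ρ ε : ℝ} {φ : Euc 4 → ℝ}

lemma bubble_eq (hα : -2 < α) (ε : ℝ) (x : Euc 4) :
    bubbleFn 4 α ε x = Cconst 4 α * ε * (ε^(α+2) + ‖x‖^(α+2)) ^ (-(2/(α+2))) := by
  unfold bubbleFn Cconst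
  norm_num [Real.rpow_one]

lemma bubble_sq (hα : -2 < α) (hε0 : 0 < ε) (x : Euc 4) (C := Cconst 4 α) :
    (bubbleFn 4 α ε x)^2 = Wfun α (Cconst 4 α) ε ‖x‖ := by
  rw [bubble_eq hα ε x]
  unfold Wfun
  have hB := basepos hα hε0 (norm_nonneg x)
  have hb : α + 2 ≠ 0 := by intro h; linarith
  rw [mul_pow, mul_pow, ← Real.rpow_natCast ((ε^(α+2) + ‖x‖^(α+2)) ^ (-(2/(α+2)))) 2,
    ← Real.rpow_mul hB.le,
    show (-(2/(α+2)) * ((2:ℕ):ℝ)) = -(4/(α+2)) by push_cast; rw [neg_mul, div_mul_eq_mul_div]; norm_num]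
end pointwise



section continuity
variable {α C ρ ε : ℝ}

lemma Wcont (hα : -2 < α) (hε0 : 0 < ε) : ContinuousOn (Wfun α C ε) (Ici 0) := by
  have hb : (0:ℝ) ≤ α + 2 := by linarith
  unfold Wfun
  apply ContinuousOn.mul continuousOn_const
  apply ContinuousOn.rpow_const
  · exact (continuous_const.add (Real.continuous_rpow_const hb)).continuousOn
  · exact fun r hr => Or.inl (basepos hα hε0 hr).ne'

lemma profCont (hα : -2 < α) (hC : 0 < C) (hε0 : 0 < ε) :
    ContinuousOn (fun r => Wfun α C ε r * (Real.log (Wfun α C ε r) - (Real.exp 1)⁻¹))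
      (Ici 0) :=
  (Wcont hα hε0).mul (((Wcont hα hε0).log
    (fun r hr => (Wpos hα hC hε0 hr).ne')).sub continuousOn_const)

lemma pointwise_main {φ : Euc 4 → ℝ} (hα : -2 < α) (hρ0 : 0 < ρ) (hε0 : 0 < ε)
    (hC1 : 1 < Cconst 4 α) (hεC : Cconst 4 α * ε ≤ ρ^2)
    (hφ01 : ∀ x, φ x ∈ Icc (0:ℝ) 1)
    (hφ1 : ∀ x : Euc 4, ‖x‖ ≤ ρ → φ x = 1) (hφ0 : ∀ x : Euc 4, 2*ρ ≤ ‖x‖ → φ x = 0)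
    (x : Euc 4) :
    ffun α (Cconst 4 α) ρ ε ‖x‖
      ≤ (φ x * bubbleFn 4 α ε x)^2 * Real.log ((φ x * bubbleFn 4 α ε x)^2) := by
  have hC0 : (0:ℝ) < Cconst 4 α := by linarith
  unfold ffun
  by_cases hx2 : ‖x‖ ≤ 2*ρ
  · rw [if_pos hx2]
    have hsq : (φ x * bubbleFn 4 α ε x)^2 = (φ x)^2 * Wfun α (Cconst 4 α) ε ‖x‖ := by
      rw [mul_pow, bubble_sq hα hε0 x]
    rw [hsq]
    refine mul_log_ge (sq_nonneg _) (pow_le_one₀ (hφ01 x).1 (hφ01 x).2)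
      (Wpos hα hC0 hε0 (norm_nonneg x)) ?_
    by_cases hxρ : ‖x‖ ≤ ρ
    · left; rw [hφ1 x hxρ]; norm_num
    · right
      exact Real.log_nonpos (Wpos hα hC0 hε0 (norm_nonneg x)).le
        (Wle_one hα hC0 hε0 hρ0 hεC (not_le.1 hxρ).le)
  · rw [if_neg hx2, hφ0 x (not_le.1 hx2).le]
    simp

end continuity

lemma one_sub_le_rpow_neg {x p : ℝ} (hx : 0 ≤ x) (hp : 0 ≤ p) :
    1 - p * x ≤ (1 + x) ^ (-p) := by
  have h1 : (0:ℝ) < 1 + x := by linarith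
  rw [Real.rpow_def_of_pos h1]
  have h2 : Real.log (1 + x) ≤ x := by
    have := Real.log_le_sub_one_of_pos h1; linarith
  calc 1 - p * x ≤ 1 + (-p * Real.log (1 + x)) := by
        have : p * Real.log (1+x) ≤ p * x := mul_le_mul_of_nonneg_left h2 hp
        linarith
    _ ≤ Real.exp (Real.log (1 + x) * -p) := by
        rw [mul_comm]; exact Real.add_one_le_exp _ |>.trans_eq' (by ring_nf)

lemma qcontOn {α ε : ℝ} (hα : -2 < α) (hε0 : 0 < ε) :
    ContinuousOn (fun y : ℝ => y^3 * (ε^(α+2)+y^(α+2))^(-(4/(α+2)))) (Ici 0) := by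
  have hb : (0:ℝ) ≤ α + 2 := by linarith
  apply ContinuousOn.mul (continuous_pow 3).continuousOn
  apply ContinuousOn.rpow_const
  · exact (continuous_const.add (Real.continuous_rpow_const hb)).continuousOn
  · exact fun r hr => Or.inl (basepos hα hε0 hr).ne'

lemma kcontOn {α ε : ℝ} (hα : -2 < α) (hε0 : 0 < ε) :
    ContinuousOn (fun y : ℝ =>
      y^3 * (ε^(α+2)+y^(α+2))^(-(4/(α+2))) * Real.log (1+(y/ε)^(α+2))) (Ici 0) := by
  have hb : (0:ℝ) ≤ α + 2 := by linarith
  apply ContinuousOn.mul (qcontOn hα hε0)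
  apply ContinuousOn.log
  · exact (continuous_const.add ((Real.continuous_rpow_const hb).comp
      (continuous_id.div_const ε))).continuousOn
  · intro y hy
    have : (0:ℝ) ≤ (y/ε)^(α+2) := Real.rpow_nonneg (div_nonneg hy hε0.le) _
    positivity

lemma prof_eq {α C ε : ℝ} (hα : -2 < α) (hC0 : 0 < C) (hε0 : 0 < ε) {y : ℝ} (hy : 0 ≤ y) :
    Wfun α C ε y * (Real.log (Wfun α C ε y) - (Real.exp 1)⁻¹)
    = C^2*ε^2 * ((Real.log (C^2) + 2*Real.log (1/ε) - (Real.exp 1)⁻¹)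
          * ((ε^(α+2)+y^(α+2))^(-(4/(α+2))))
        - (4/(α+2)) * ((ε^(α+2)+y^(α+2))^(-(4/(α+2))) * Real.log (1 + (y/ε)^(α+2)))) := by
  have hb : (0:ℝ) < α+2 := by linarith
  have hA : 0 < ε^(α+2) + y^(α+2) := basepos hα hε0 hy
  have hz0 : (0:ℝ) ≤ (y/ε)^(α+2) := Real.rpow_nonneg (by positivity) _
  have hz1 : (0:ℝ) < 1 + (y/ε)^(α+2) := by linarith
  have hzd : (y/ε)^(α+2) = y^(α+2)/ε^(α+2) := Real.div_rpow hy hε0.le _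
  have hAfac : ε^(α+2) + y^(α+2) = ε^(α+2) * (1 + (y/ε)^(α+2)) := by
    rw [hzd]; field_simp
  have hεβ : (0:ℝ) < ε^(α+2) := Real.rpow_pos_of_pos hε0 _
  have hlogW : Real.log (Wfun α C ε y)
      = Real.log (C^2) + 2*Real.log ε
        - (4/(α+2))*((α+2)*Real.log ε + Real.log (1+(y/ε)^(α+2))) := by
    unfold Wfun
    rw [Real.log_mul (by positivity) (Real.rpow_pos_of_pos hA _).ne',
      Real.log_mul (by positivity) (by positivity),
      Real.log_rpow hA, hAfac,
      Real.log_mul hεβ.ne' hz1.ne', Real.log_rpow hε0,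
      Real.log_pow, Real.log_pow]
    push_cast
    ring
  have hinv : Real.log (1/ε) = -Real.log ε := by rw [one_div, Real.log_inv]
  rw [hlogW, hinv]
  unfold Wfun
  field_simp
  ring

lemma Jlow {α ε ρ : ℝ} (hα : -2 < α) (hε0 : 0 < ε) (hρ0 : 0 < ρ) (hε2ρ : ε ≤ 2*ρ) :
    Real.log (2*ρ) - Real.log ε - 4/(α+2)^2
      ≤ ∫ y in (0:ℝ)..(2*ρ), y^3 * (ε^(α+2)+y^(α+2))^(-(4/(α+2))) := by
  have hb : (0:ℝ) < α + 2 := by linarith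
  have h2ρ : (0:ℝ) < 2*ρ := by linarith
  have hint0ε : IntervalIntegrable (fun y : ℝ => y^3 * (ε^(α+2)+y^(α+2))^(-(4/(α+2))))
      volume 0 ε := by
    apply ContinuousOn.intervalIntegrable
    rw [uIcc_of_le hε0.le]
    exact (qcontOn hα hε0).mono (fun y hy => hy.1)
  have hintε2ρ : IntervalIntegrable (fun y : ℝ => y^3 * (ε^(α+2)+y^(α+2))^(-(4/(α+2))))
      volume ε (2*ρ) := by
    apply ContinuousOn.intervalIntegrable
    rw [uIcc_of_le hε2ρ]
    exact (qcontOn hα hε0).mono (fun y hy => le_trans hε0.le hy.1)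
  have hsplit : ∫ y in (0:ℝ)..(2*ρ), y^3 * (ε^(α+2)+y^(α+2))^(-(4/(α+2)))
      = (∫ y in (0:ℝ)..ε, y^3 * (ε^(α+2)+y^(α+2))^(-(4/(α+2))))
        + ∫ y in ε..(2*ρ), y^3 * (ε^(α+2)+y^(α+2))^(-(4/(α+2))) :=
    (intervalIntegral.integral_add_adjacent_intervals hint0ε hintε2ρ).symm
  have h0ε : (0:ℝ) ≤ ∫ y in (0:ℝ)..ε, y^3 * (ε^(α+2)+y^(α+2))^(-(4/(α+2))) := by
    apply intervalIntegral.integral_nonneg hε0.le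
    intro u hu
    exact mul_nonneg (pow_nonneg hu.1 3) (Real.rpow_pos_of_pos (basepos hα hε0 hu.1) _).le
  -- pointwise lower bound on [ε, 2ρ]
  have hpw : ∀ y ∈ Icc ε (2*ρ),
      y⁻¹ - (4/(α+2))*ε^(α+2)*y^(-(α+2)-1)
        ≤ y^3 * (ε^(α+2)+y^(α+2))^(-(4/(α+2))) := by
    intro y hy
    have hy0 : 0 < y := lt_of_lt_of_le hε0 hy.1
    have hyβ : 0 < y^(α+2) := Real.rpow_pos_of_pos hy0 _
    have hz0 : (0:ℝ) ≤ (ε/y)^(α+2) := Real.rpow_nonneg (by positivity) _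
    have hzd : (ε/y)^(α+2) = ε^(α+2)/y^(α+2) := Real.div_rpow hε0.le hy0.le _
    have hfac : ε^(α+2) + y^(α+2) = y^(α+2) * (1 + (ε/y)^(α+2)) := by
      rw [hzd]; field_simp; ring
    have hABpow : (ε^(α+2)+y^(α+2))^(-(4/(α+2)))
        = (y^(α+2))^(-(4/(α+2))) * (1+(ε/y)^(α+2))^(-(4/(α+2))) := by
      rw [hfac, Real.mul_rpow hyβ.le (by linarith)]
    have hy4 : (y^(α+2))^(-(4/(α+2))) = y^(-(4:ℝ)) := by
      rw [← Real.rpow_mul hy0.le]; congr 1; field_simp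
    have hy31 : (y:ℝ)^3 * y^(-(4:ℝ)) = y⁻¹ := by
      rw [← Real.rpow_natCast y 3, ← Real.rpow_add hy0,
        show ((3:ℕ):ℝ) + -(4:ℝ) = -1 by norm_num, Real.rpow_neg hy0.le, Real.rpow_one]
    have hbern : 1 - (4/(α+2))*(ε/y)^(α+2) ≤ (1+(ε/y)^(α+2))^(-(4/(α+2))) :=
      one_sub_le_rpow_neg hz0 (by positivity)
    have hzy : (ε/y)^(α+2) * y⁻¹ = ε^(α+2) * y^(-(α+2)-1) := by
      have hye : y ^ (-(α+2)-1 : ℝ) = (y^(α+2))⁻¹ * y⁻¹ := by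
        rw [show (-(α+2)-1 : ℝ) = -((α+2)+1) by ring, Real.rpow_neg hy0.le,
          Real.rpow_add hy0, Real.rpow_one, mul_inv]
      rw [hzd, hye]
      field_simp
    calc y⁻¹ - (4/(α+2))*ε^(α+2)*y^(-(α+2)-1)
        = y⁻¹ * (1 - (4/(α+2))*(ε/y)^(α+2)) := by
          rw [mul_sub, mul_one]; rw [show y⁻¹ * ((4/(α+2))*(ε/y)^(α+2)) = (4/(α+2))*((ε/y)^(α+2) * y⁻¹) by ring, hzy]; ring
      _ ≤ y⁻¹ * (1+(ε/y)^(α+2))^(-(4/(α+2))) :=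
          mul_le_mul_of_nonneg_left hbern (inv_pos.2 hy0).le
      _ = y^3 * (ε^(α+2)+y^(α+2))^(-(4/(α+2))) := by
          rw [hABpow, ← mul_assoc, hy4, hy31]
  have hglow : IntervalIntegrable (fun y : ℝ => y⁻¹ - (4/(α+2))*ε^(α+2)*y^(-(α+2)-1))
      volume ε (2*ρ) := by
    apply ContinuousOn.intervalIntegrable
    rw [uIcc_of_le hε2ρ]
    apply ContinuousOn.sub
    · exact continuousOn_inv₀.mono (fun y hy => (lt_of_lt_of_le hε0 hy.1).ne')
    · apply ContinuousOn.mul continuousOn_const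
      apply ContinuousOn.rpow_const continuousOn_id
      exact fun y hy => Or.inl (lt_of_lt_of_le hε0 hy.1).ne'
  have hFTC : ∫ y in ε..(2*ρ), (y⁻¹ - (4/(α+2))*ε^(α+2)*y^(-(α+2)-1))
      = (Real.log (2*ρ) + (4/(α+2)^2)*ε^(α+2)*(2*ρ)^(-(α+2)))
        - (Real.log ε + (4/(α+2)^2)*ε^(α+2)*ε^(-(α+2))) := by
    apply intervalIntegral.integral_eq_sub_of_hasDerivAt (f := fun z : ℝ => Real.log z + (4/(α+2)^2)*ε^(α+2)*z^(-(α+2))) ?_ hglow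
    intro y hy
    rw [uIcc_of_le hε2ρ] at hy
    have hy0 : 0 < y := lt_of_lt_of_le hε0 hy.1
    have h1 : HasDerivAt Real.log y⁻¹ y := Real.hasDerivAt_log hy0.ne'
    have h2 : HasDerivAt (fun z : ℝ => z^(-(α+2))) (-(α+2) * y^(-(α+2)-1)) y :=
      Real.hasDerivAt_rpow_const (Or.inl hy0.ne')
    have h3 := h1.add (h2.const_mul ((4/(α+2)^2)*ε^(α+2)))
    convert h3 using 1
    · rfl
    have hb' : α + 2 ≠ 0 := hb.ne'
    field_simp
    ring
  have hεε : ε^(α+2)*ε^(-(α+2)) = 1 := by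
    have he0 : (α+2) + -(α+2) = (0:ℝ) := by ring
    rw [← Real.rpow_add hε0, he0, Real.rpow_zero]
  have h2ρpow : (0:ℝ) ≤ (4/(α+2)^2)*ε^(α+2)*(2*ρ)^(-(α+2)) := by positivity
  have hmono := intervalIntegral.integral_mono_on hε2ρ hglow hintε2ρ hpw
  rw [hFTC] at hmono
  rw [hsplit]
  have : (4/(α+2)^2)*(ε^(α+2)*ε^(-(α+2))) = 4/(α+2)^2 := by rw [hεε]; ring
  nlinarith [hmono, h0ε]

lemma Kup {α ε ρ : ℝ} (hα : -2 < α) (hε0 : 0 < ε) (hρ0 : 0 < ρ) (hε2ρ : ε ≤ 2*ρ) :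
    ∫ y in (0:ℝ)..(2*ρ), y^3 * (ε^(α+2)+y^(α+2))^(-(4/(α+2))) * Real.log (1+(y/ε)^(α+2))
      ≤ (α+2)/2*(Real.log (2*ρ) - Real.log ε)^2 + 1/(α+2) + 1/4 := by
  have hb : (0:ℝ) < α + 2 := by linarith
  have hεβ : (0:ℝ) < ε^(α+2) := Real.rpow_pos_of_pos hε0 _
  have hint1 : IntervalIntegrable (fun y : ℝ =>
      y^3 * (ε^(α+2)+y^(α+2))^(-(4/(α+2))) * Real.log (1+(y/ε)^(α+2))) volume 0 ε := by
    apply ContinuousOn.intervalIntegrable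
    rw [uIcc_of_le hε0.le]
    exact (kcontOn hα hε0).mono (fun y hy => hy.1)
  have hint2 : IntervalIntegrable (fun y : ℝ =>
      y^3 * (ε^(α+2)+y^(α+2))^(-(4/(α+2))) * Real.log (1+(y/ε)^(α+2))) volume ε (2*ρ) := by
    apply ContinuousOn.intervalIntegrable
    rw [uIcc_of_le hε2ρ]
    exact (kcontOn hα hε0).mono (fun y hy => le_trans hε0.le hy.1)
  have hsplit := (intervalIntegral.integral_add_adjacent_intervals hint1 hint2).symm
  -- piece 1 : [0, ε]
  have hb1int : IntervalIntegrable
      (fun y : ℝ => ε^(-((4:ℝ)+(α+2))) * y^((3:ℝ)+(α+2))) volume 0 ε := by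
    apply ContinuousOn.intervalIntegrable
    apply ContinuousOn.mul continuousOn_const
    exact (Real.continuous_rpow_const (by linarith)).continuousOn
  have hpw1 : ∀ y ∈ Icc (0:ℝ) ε,
      y^3 * (ε^(α+2)+y^(α+2))^(-(4/(α+2))) * Real.log (1+(y/ε)^(α+2))
        ≤ ε^(-((4:ℝ)+(α+2))) * y^((3:ℝ)+(α+2)) := by
    intro y hy
    have hy0 : (0:ℝ) ≤ y := hy.1
    have hz0 : (0:ℝ) ≤ (y/ε)^(α+2) := Real.rpow_nonneg (div_nonneg hy0 hε0.le) _
    have hA1 : (ε^(α+2)+y^(α+2))^(-(4/(α+2))) ≤ (ε^(α+2))^(-(4/(α+2))) :=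
      Real.rpow_le_rpow_of_nonpos hεβ (le_add_of_nonneg_right (Real.rpow_nonneg hy0 _))
        (neg_nonpos.2 (div_nonneg (by norm_num) hb.le))
    have hA2 : (ε^(α+2))^(-(4/(α+2))) = ε^(-(4:ℝ)) := by
      rw [← Real.rpow_mul hε0.le]; congr 1; field_simp
    have hlog : Real.log (1+(y/ε)^(α+2)) ≤ (y/ε)^(α+2) := by
      have := Real.log_le_sub_one_of_pos (x := 1+(y/ε)^(α+2)) (by linarith)
      linarith
    have hlog0 : 0 ≤ Real.log (1+(y/ε)^(α+2)) := Real.log_nonneg (by linarith)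
    have hq0 : (0:ℝ) ≤ y^3 * (ε^(α+2)+y^(α+2))^(-(4/(α+2))) :=
      mul_nonneg (pow_nonneg hy0 3) (Real.rpow_pos_of_pos (basepos hα hε0 hy0) _).le
    have step : y^3 * (ε^(α+2)+y^(α+2))^(-(4/(α+2))) * Real.log (1+(y/ε)^(α+2))
        ≤ (y^3 * ε^(-(4:ℝ))) * (y/ε)^(α+2) := by
      apply mul_le_mul ?_ hlog hlog0 (by positivity)
      calc y^3 * (ε^(α+2)+y^(α+2))^(-(4/(α+2))) ≤ y^3 * (ε^(α+2))^(-(4/(α+2))) :=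
            mul_le_mul_of_nonneg_left hA1 (pow_nonneg hy0 3)
        _ = y^3 * ε^(-(4:ℝ)) := by rw [hA2]
    refine le_trans step (le_of_eq ?_)
    rw [Real.div_rpow hy0 hε0.le, ← Real.rpow_natCast y 3]
    rw [show ε^(-((4:ℝ)+(α+2))) = ε^(-(4:ℝ)) * (ε^(α+2))⁻¹ by
      rw [show (-((4:ℝ)+(α+2))) = (-(4:ℝ)) + (-(α+2)) by ring, Real.rpow_add hε0,
        Real.rpow_neg hε0.le (α+2)]]
    rw [Real.rpow_add' hy0 (by intro h; linarith : (3:ℝ)+(α+2) ≠ 0), Real.rpow_natCast]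
    field_simp
    rw [← Real.rpow_natCast y 3]
    ring
  have hp1 := intervalIntegral.integral_mono_on hε0.le hint1 hb1int hpw1
  have hval1 : ∫ y in (0:ℝ)..ε, ε^(-((4:ℝ)+(α+2))) * y^((3:ℝ)+(α+2))
      = 1/((4:ℝ)+(α+2)) := by
    rw [intervalIntegral.integral_const_mul, integral_rpow (Or.inl (by linarith))]
    rw [Real.zero_rpow (by intro h; linarith : ((3:ℝ)+(α+2))+1 ≠ 0)]
    rw [show ((3:ℝ)+(α+2))+1 = (4:ℝ)+(α+2) by ring]
    rw [show ε^(-((4:ℝ)+(α+2))) = (ε^((4:ℝ)+(α+2)))⁻¹ from Real.rpow_neg hε0.le _]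
    have hεp : (0:ℝ) < ε^((4:ℝ)+(α+2)) := Real.rpow_pos_of_pos hε0 _
    field_simp
    ring
  -- piece 2 : [ε, 2ρ]
  have hg3int : IntervalIntegrable (fun y : ℝ =>
      (α+2)*(Real.log y - Real.log ε)*y⁻¹ + ε^(α+2)*y^(-(α+2)-1)) volume ε (2*ρ) := by
    apply ContinuousOn.intervalIntegrable
    rw [uIcc_of_le hε2ρ]
    have hne : ∀ y ∈ Icc ε (2*ρ), y ≠ 0 := fun y hy => (lt_of_lt_of_le hε0 hy.1).ne'
    apply ContinuousOn.add
    · exact (continuousOn_const.mul ((continuousOn_id.log (fun y hy => hne y hy)).sub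
        continuousOn_const)).mul (continuousOn_inv₀.mono (fun y hy => hne y hy))
    · exact continuousOn_const.mul (ContinuousOn.rpow_const continuousOn_id
        (fun y hy => Or.inl (hne y hy)))
  have hpw2 : ∀ y ∈ Icc ε (2*ρ),
      y^3 * (ε^(α+2)+y^(α+2))^(-(4/(α+2))) * Real.log (1+(y/ε)^(α+2))
        ≤ (α+2)*(Real.log y - Real.log ε)*y⁻¹ + ε^(α+2)*y^(-(α+2)-1) := by
    intro y hy
    have hy0 : 0 < y := lt_of_lt_of_le hε0 hy.1
    have hyβ : 0 < y^(α+2) := Real.rpow_pos_of_pos hy0 _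
    have hyε : (1:ℝ) ≤ y/ε := (one_le_div hε0).2 hy.1
    have hz1 : (1:ℝ) ≤ (y/ε)^(α+2) := by
      calc (1:ℝ) = 1^(α+2) := (Real.one_rpow _).symm
        _ ≤ (y/ε)^(α+2) := Real.rpow_le_rpow (by norm_num) hyε hb.le
    have hz0 : (0:ℝ) < (y/ε)^(α+2) := by linarith
    -- kernel bound q ≤ 1/y
    have hA1 : (ε^(α+2)+y^(α+2))^(-(4/(α+2))) ≤ (y^(α+2))^(-(4/(α+2))) :=
      Real.rpow_le_rpow_of_nonpos hyβ (le_add_of_nonneg_left (Real.rpow_nonneg hε0.le _))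
        (neg_nonpos.2 (div_nonneg (by norm_num) hb.le))
    have hy4 : (y^(α+2))^(-(4/(α+2))) = y^(-(4:ℝ)) := by
      rw [← Real.rpow_mul hy0.le]; congr 1; field_simp
    have hy31 : (y:ℝ)^3 * y^(-(4:ℝ)) = y⁻¹ := by
      rw [← Real.rpow_natCast y 3, ← Real.rpow_add hy0,
        show ((3:ℕ):ℝ) + -(4:ℝ) = -1 by norm_num, Real.rpow_neg hy0.le, Real.rpow_one]
    have hq : y^3 * (ε^(α+2)+y^(α+2))^(-(4/(α+2))) ≤ y⁻¹ := by
      calc y^3 * (ε^(α+2)+y^(α+2))^(-(4/(α+2))) ≤ y^3 * (y^(α+2))^(-(4/(α+2))) :=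
            mul_le_mul_of_nonneg_left hA1 (pow_nonneg hy0.le 3)
        _ = y⁻¹ := by rw [hy4, hy31]
    -- log bound
    have hlogz : Real.log ((y/ε)^(α+2)) = (α+2)*(Real.log y - Real.log ε) := by
      rw [Real.log_rpow (by positivity), Real.log_div hy0.ne' hε0.ne']
    have hlog2 : Real.log (1+(y/ε)^(α+2))
        ≤ (α+2)*(Real.log y - Real.log ε) + ((y/ε)^(α+2))⁻¹ := by
      have hd : Real.log ((1+(y/ε)^(α+2))/((y/ε)^(α+2)))
          = Real.log (1+(y/ε)^(α+2)) - Real.log ((y/ε)^(α+2)) :=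
        Real.log_div (by linarith) hz0.ne'
      have hd2 := Real.log_le_sub_one_of_pos (x := (1+(y/ε)^(α+2))/((y/ε)^(α+2)))
        (by positivity)
      rw [hd] at hd2
      have hd3 : (1+(y/ε)^(α+2))/((y/ε)^(α+2)) - 1 = ((y/ε)^(α+2))⁻¹ := by
        field_simp
        ring
      rw [hd3] at hd2
      rw [← hlogz]
      linarith
    have hlog0 : 0 ≤ Real.log (1+(y/ε)^(α+2)) := Real.log_nonneg (by linarith)
    have hq0 : (0:ℝ) ≤ y^3 * (ε^(α+2)+y^(α+2))^(-(4/(α+2))) :=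
      mul_nonneg (pow_nonneg hy0.le 3) (Real.rpow_pos_of_pos (basepos hα hε0 hy0.le) _).le
    have step := mul_le_mul hq hlog2 hlog0 (inv_pos.2 hy0).le
    refine le_trans step (le_of_eq ?_)
    -- y⁻¹ * (β(log y - log ε) + z⁻¹) = g₃
    have hzinv : ((y/ε)^(α+2))⁻¹ = (ε/y)^(α+2) := by
      rw [← Real.inv_rpow (div_nonneg hy0.le hε0.le), inv_div]
    have hzy : (ε/y)^(α+2) * y⁻¹ = ε^(α+2) * y^(-(α+2)-1) := by
      have hzd : (ε/y)^(α+2) = ε^(α+2)/y^(α+2) := Real.div_rpow hε0.le hy0.le _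
      have hye : y ^ (-(α+2)-1 : ℝ) = (y^(α+2))⁻¹ * y⁻¹ := by
        rw [show (-(α+2)-1 : ℝ) = -((α+2)+1) by ring, Real.rpow_neg hy0.le,
          Real.rpow_add hy0, Real.rpow_one, mul_inv]
      rw [hzd, hye]
      field_simp
    rw [hzinv]
    rw [show y⁻¹ * ((α+2)*(Real.log y - Real.log ε) + (ε/y)^(α+2))
        = (α+2)*(Real.log y - Real.log ε)*y⁻¹ + ((ε/y)^(α+2) * y⁻¹) by ring, hzy]
  have hp2 := intervalIntegral.integral_mono_on hε2ρ hint2 hg3int hpw2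
  -- FTC for g₃
  have hFTC : ∫ y in ε..(2*ρ), ((α+2)*(Real.log y - Real.log ε)*y⁻¹ + ε^(α+2)*y^(-(α+2)-1))
      = ((α+2)/2*(Real.log (2*ρ) - Real.log ε)^2 - (1/(α+2))*ε^(α+2)*(2*ρ)^(-(α+2)))
        - ((α+2)/2*(Real.log ε - Real.log ε)^2 - (1/(α+2))*ε^(α+2)*ε^(-(α+2))) := by
    apply intervalIntegral.integral_eq_sub_of_hasDerivAt
      (f := fun z : ℝ => (α+2)/2*(Real.log z - Real.log ε)^2 - (1/(α+2))*ε^(α+2)*z^(-(α+2)))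
      ?_ hg3int
    intro y hy
    rw [uIcc_of_le hε2ρ] at hy
    have hy0 : 0 < y := lt_of_lt_of_le hε0 hy.1
    have h1 : HasDerivAt (fun z : ℝ => Real.log z - Real.log ε) y⁻¹ y :=
      (Real.hasDerivAt_log hy0.ne').sub_const _
    have hsq := h1.pow 2
    have h2 : HasDerivAt (fun z : ℝ => z^(-(α+2))) (-(α+2) * y^(-(α+2)-1)) y :=
      Real.hasDerivAt_rpow_const (Or.inl hy0.ne')
    have h3 := (hsq.const_mul ((α+2)/2)).sub (h2.const_mul ((1/(α+2))*ε^(α+2)))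
    convert h3 using 1
    · rfl
    have hb' : α + 2 ≠ 0 := hb.ne'
    field_simp
    ring
  have hεε : ε^(α+2)*ε^(-(α+2)) = 1 := by
    have he0 : (α+2) + -(α+2) = (0:ℝ) := by ring
    rw [← Real.rpow_add hε0, he0, Real.rpow_zero]
  have h2ρpow : (0:ℝ) ≤ (1/(α+2))*ε^(α+2)*(2*ρ)^(-(α+2)) := by positivity
  rw [hsplit]
  rw [hFTC] at hp2
  rw [hval1] at hp1
  have h4β : 1/((4:ℝ)+(α+2)) ≤ 1/4 := by
    rw [div_le_div_iff₀ (by linarith) (by norm_num)]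
    linarith
  have hε1 : (1/(α+2))*(ε^(α+2)*ε^(-(α+2))) = 1/(α+2) := by rw [hεε]; ring
  nlinarith [hp1, hp2]

lemma oneD {α C ρ ε : ℝ} (hα : -2 < α) (hC1 : 1 < C) (hρ0 : 0 < ρ) (hρ1 : 2*ρ < 1)
    (hε0 : 0 < ε) (hε2ρ : ε ≤ 2*ρ) (hεe : ε ≤ (Real.exp 1)⁻¹) :
    C^2*ε^2 * ((Real.log (C^2) + 2*Real.log (1/ε) - (Real.exp 1)⁻¹)
        * ((Real.log (2*ρ) + Real.log (1/ε)) - 4/(α+2)^2)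
      - 2*(Real.log (2*ρ) + Real.log (1/ε))^2 - 4/(α+2)^2 - 1/(α+2))
    ≤ ∫ y in (0:ℝ)..(2*ρ),
        y^3 * (Wfun α C ε y * (Real.log (Wfun α C ε y) - (Real.exp 1)⁻¹)) := by
  have hb : (0:ℝ) < α + 2 := by linarith
  have hC0 : (0:ℝ) < C := by linarith
  have hε2ρ' : (0:ℝ) ≤ 2*ρ := by linarith
  have hinv : Real.log (1/ε) = -Real.log ε := by rw [one_div, Real.log_inv]
  set c₁ := Real.log (C^2) + 2*Real.log (1/ε) - (Real.exp 1)⁻¹ with hc₁def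
  -- rewrite the integrand
  have hcong : ∫ y in (0:ℝ)..(2*ρ),
        y^3 * (Wfun α C ε y * (Real.log (Wfun α C ε y) - (Real.exp 1)⁻¹))
      = ∫ y in (0:ℝ)..(2*ρ), C^2*ε^2 *
          (c₁ * (y^3 * (ε^(α+2)+y^(α+2))^(-(4/(α+2))))
            - (4/(α+2)) * (y^3 * (ε^(α+2)+y^(α+2))^(-(4/(α+2)))
                * Real.log (1+(y/ε)^(α+2)))) := by
    apply intervalIntegral.integral_congr
    intro y hy
    rw [uIcc_of_le hε2ρ'] at hy
    simp only
    rw [prof_eq hα hC0 hε0 hy.1, hc₁def]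
    ring
  have hqint : IntervalIntegrable (fun y : ℝ =>
      y^3 * (ε^(α+2)+y^(α+2))^(-(4/(α+2)))) volume 0 (2*ρ) := by
    apply ContinuousOn.intervalIntegrable
    rw [uIcc_of_le hε2ρ']
    exact (qcontOn hα hε0).mono (fun y hy => hy.1)
  have hkint : IntervalIntegrable (fun y : ℝ =>
      y^3 * (ε^(α+2)+y^(α+2))^(-(4/(α+2))) * Real.log (1+(y/ε)^(α+2))) volume 0 (2*ρ) := by
    apply ContinuousOn.intervalIntegrable
    rw [uIcc_of_le hε2ρ']
    exact (kcontOn hα hε0).mono (fun y hy => hy.1)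
  have hlin : ∫ y in (0:ℝ)..(2*ρ), C^2*ε^2 *
          (c₁ * (y^3 * (ε^(α+2)+y^(α+2))^(-(4/(α+2))))
            - (4/(α+2)) * (y^3 * (ε^(α+2)+y^(α+2))^(-(4/(α+2)))
                * Real.log (1+(y/ε)^(α+2))))
      = C^2*ε^2 * (c₁ * (∫ y in (0:ℝ)..(2*ρ), y^3 * (ε^(α+2)+y^(α+2))^(-(4/(α+2))))
          - (4/(α+2)) * ∫ y in (0:ℝ)..(2*ρ),
              y^3 * (ε^(α+2)+y^(α+2))^(-(4/(α+2))) * Real.log (1+(y/ε)^(α+2))) := by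
    rw [intervalIntegral.integral_const_mul,
      intervalIntegral.integral_sub (hqint.const_mul c₁) (hkint.const_mul (4/(α+2))),
      intervalIntegral.integral_const_mul, intervalIntegral.integral_const_mul]
  rw [hcong, hlin]
  -- positivity of c₁
  have hee : (Real.exp 1)⁻¹ ≤ 1 := inv_le_one_of_one_le₀ (Real.one_le_exp zero_le_one)
  have hlogC : 0 ≤ Real.log (C^2) := Real.log_nonneg (by nlinarith)
  have hL1 : 1 ≤ Real.log (1/ε) := by
    have h1 : Real.exp 1 ≤ 1/ε := by
      rw [one_div]
      calc Real.exp 1 = ((Real.exp 1)⁻¹)⁻¹ := by rw [inv_inv]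
        _ ≤ ε⁻¹ := by
            apply inv_anti₀ hε0 hεe
    calc (1:ℝ) = Real.log (Real.exp 1) := (Real.log_exp 1).symm
      _ ≤ Real.log (1/ε) := Real.log_le_log (Real.exp_pos 1) h1
  have hc₁0 : 0 ≤ c₁ := by rw [hc₁def]; linarith
  have hJ := Jlow hα hε0 hρ0 hε2ρ
  have hK := Kup hα hε0 hρ0 hε2ρ
  have hJ' : c₁ * (Real.log (2*ρ) - Real.log ε - 4/(α+2)^2)
      ≤ c₁ * ∫ y in (0:ℝ)..(2*ρ), y^3 * (ε^(α+2)+y^(α+2))^(-(4/(α+2))) :=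
    mul_le_mul_of_nonneg_left hJ hc₁0
  have hK' : (4/(α+2)) * (∫ y in (0:ℝ)..(2*ρ),
        y^3 * (ε^(α+2)+y^(α+2))^(-(4/(α+2))) * Real.log (1+(y/ε)^(α+2)))
      ≤ (4/(α+2)) * ((α+2)/2*(Real.log (2*ρ) - Real.log ε)^2 + 1/(α+2) + 1/4) :=
    mul_le_mul_of_nonneg_left hK (by positivity)
  have hpk : (4/(α+2)) * ((α+2)/2*(Real.log (2*ρ) - Real.log ε)^2 + 1/(α+2) + 1/4)
      = 2*(Real.log (2*ρ) - Real.log ε)^2 + 4/(α+2)^2 + 1/(α+2) := by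
    field_simp
    ring
  rw [hpk] at hK'
  apply mul_le_mul_of_nonneg_left ?_ (by positivity : (0:ℝ) ≤ C^2*ε^2)
  rw [hinv]
  linarith [hJ', hK']

lemma finalAlg (β C ρ L₁ : ℝ) (hC : 1 < C) (hρ0 : 0 < ρ)
    (hL₁ : 0 ≤ L₁) :
    Real.log (C^2 * ρ^2 * Real.exp (-8/β^2) / (2*ρ)^4) * L₁
      - (1 + |(Real.log (C^2) - (Real.exp 1)⁻¹) * Real.log (2*ρ)
            - (4/β^2) * (Real.log (C^2) - (Real.exp 1)⁻¹)
            - 2 * (Real.log (2*ρ))^2 - 4/β^2 - 1/β|)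
    ≤ (Real.log (C^2) + 2*L₁ - (Real.exp 1)⁻¹) * ((Real.log (2*ρ) + L₁) - 4/β^2)
      - 2*(Real.log (2*ρ) + L₁)^2 - 4/β^2 - 1/β := by
  have hC0 : (0:ℝ) < C := by linarith
  have e1 : Real.log (C^2 * ρ^2 * Real.exp (-8/β^2) / (2*ρ)^4)
      = Real.log (C^2) + 2*Real.log ρ + (-8/β^2) - 4*Real.log (2*ρ) := by
    rw [Real.log_div (by positivity) (by positivity),
      Real.log_mul (by positivity) (Real.exp_pos _).ne',
      Real.log_mul (by positivity) (by positivity), Real.log_exp]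
    have h4 : Real.log ((2*ρ)^4) = 4 * Real.log (2*ρ) := by
      rw [Real.log_pow]; push_cast; ring
    have h5 : Real.log (ρ^2) = 2 * Real.log ρ := by
      rw [Real.log_pow]; push_cast; ring
    rw [h4, h5]
  have e2 : Real.log (2*ρ) = Real.log 2 + Real.log ρ := Real.log_mul two_ne_zero hρ0.ne'
  set c₃ := (Real.log (C^2) - (Real.exp 1)⁻¹) * Real.log (2*ρ)
      - (4/β^2) * (Real.log (C^2) - (Real.exp 1)⁻¹)
      - 2 * (Real.log (2*ρ))^2 - 4/β^2 - 1/β with hc₃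
  clear_value c₃
  have key : (Real.log (C^2) + 2*L₁ - (Real.exp 1)⁻¹) * ((Real.log (2*ρ) + L₁) - 4/β^2)
      - 2*(Real.log (2*ρ) + L₁)^2 - 4/β^2 - 1/β
      = (Real.log (C^2) + 2*Real.log ρ + (-8/β^2) - 4*Real.log (2*ρ)) * L₁
        + (2*Real.log 2 - (Real.exp 1)⁻¹) * L₁ + c₃ := by
    rw [hc₃, e2]; ring
  have h2l2 : (Real.exp 1)⁻¹ ≤ 2 * Real.log 2 := by
    have h1 : (Real.exp 1)⁻¹ ≤ 1 := inv_le_one_of_one_le₀ (Real.one_le_exp zero_le_one)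
    have h2 : (0.6931471803 : ℝ) < Real.log 2 := Real.log_two_gt_d9
    linarith
  rw [e1, key]
  have h3 : 0 ≤ (2*Real.log 2 - (Real.exp 1)⁻¹) * L₁ := mul_nonneg (by linarith) hL₁
  have habs : -|c₃| ≤ c₃ := neg_abs_le c₃
  linarith


/-- for `N = 4`, a lower bound for `∫_Ω U_{ε,α}² log U_{ε,α}²`. -/
theorem statement14 (α : ℝ) (hα : -2 < α)
    (ρ : ℝ) (hρ : ρ ∈ Set.Ioo (0 : ℝ) (1 / 2))
    (φ : Euc 4 → ℝ) (hφsmooth : ContDiff ℝ (⊤ : ℕ∞) φ) (hφcpt : HasCompactSupport φ)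
    (hφrad : IsRadial φ) (hφ01 : ∀ x, φ x ∈ Set.Icc (0 : ℝ) 1)
    (hφ1 : ∀ x : Euc 4, ‖x‖ ≤ ρ → φ x = 1) (hφ0 : ∀ x : Euc 4, 2 * ρ ≤ ‖x‖ → φ x = 0) :
    ∃ M > (0 : ℝ), ∃ ε₀ > (0 : ℝ), ∀ ε ∈ Set.Ioo (0 : ℝ) ε₀,
      Cconst 4 α ^ 2 * omegaN 4 *
          Real.log (Cconst 4 α ^ 2 * ρ ^ 2 * Real.exp (-8 / (2 + α) ^ 2) / (2 * ρ) ^ 4) *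
          ε ^ 2 * Real.log (1 / ε) - M * ε ^ 2 ≤
        ∫ x in Omega 4 α,
          (φ x * bubbleFn 4 α ε x) ^ 2 * Real.log ((φ x * bubbleFn 4 α ε x) ^ 2) := by
  obtain ⟨hρ0, hρh⟩ := hρ
  have hb : (0:ℝ) < α + 2 := by linarith
  have hρ1 : 2*ρ < 1 := by linarith
  have hC1 : 1 < Cconst 4 α := by
    unfold Cconst
    refine (Real.one_lt_rpow_iff_of_pos ?_).2 (Or.inl ⟨?_, ?_⟩)
    · push_cast; nlinarith
    · push_cast; nlinarith
    · apply div_pos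
      · push_cast; norm_num
      · linarith
  have hC0 : (0:ℝ) < Cconst 4 α := by linarith
  set C := Cconst 4 α with hCdef
  have hV : 0 < (volume (ball (0:Euc 4) 1)).toReal :=
    ENNReal.toReal_pos (measure_ball_pos volume (0:Euc 4) one_pos).ne' measure_ball_lt_top.ne
  have hω : 0 < omegaN 4 := by
    unfold omegaN; push_cast; linarith
  set c₃ := (Real.log (C^2) - (Real.exp 1)⁻¹) * Real.log (2*ρ)
      - (4/(α+2)^2) * (Real.log (C^2) - (Real.exp 1)⁻¹)
      - 2*(Real.log (2*ρ))^2 - 4/(α+2)^2 - 1/(α+2) with hc₃def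
  refine ⟨C^2 * omegaN 4 * (1 + |c₃|),
    mul_pos (mul_pos (pow_pos hC0 2) hω) (by positivity),
    min (ρ^2/C) (Real.exp 1)⁻¹, lt_min (by positivity) (by positivity), ?_⟩
  intro ε hε
  obtain ⟨hε0, hεlt⟩ := hε
  have hεC : C * ε ≤ ρ^2 := by
    have h := le_trans hεlt.le (min_le_left _ _)
    rw [le_div_iff₀ hC0] at h; linarith
  have hεe : ε ≤ (Real.exp 1)⁻¹ := le_trans hεlt.le (min_le_right _ _)
  have h2e : (2:ℝ) ≤ Real.exp 1 := by have := Real.add_one_le_exp 1; linarith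
  have hε1 : ε < 1 := by
    have h1 : (Real.exp 1)⁻¹ ≤ 2⁻¹ := by
      apply inv_anti₀ (by norm_num) h2e
    linarith [hεe]
  have hε2ρ : ε ≤ 2*ρ := by nlinarith [hεC, hC1, hρ0]
  have hL₁ : 0 ≤ Real.log (1/ε) := by
    rw [one_div, Real.log_inv]
    have := Real.log_nonpos hε0.le hε1.le
    linarith
  -- measurability of the domain
  have hΩmeas : MeasurableSet (Omega 4 α) := by
    unfold Omega; split_ifs
    exacts [measurableSet_ball, measurableSet_ball.diff (measurableSet_singleton 0)]
  have hΩsub : Omega 4 α ⊆ closedBall (0:Euc 4) 1 := by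
    unfold Omega; split_ifs
    · exact ball_subset_closedBall
    · exact diff_subset.trans ball_subset_closedBall
  -- integrability
  have hprofnormCont : Continuous (fun x : Euc 4 =>
      Wfun α C ε ‖x‖ * (Real.log (Wfun α C ε ‖x‖) - (Real.exp 1)⁻¹)) :=
    (profCont hα hC0 hε0).comp_continuous continuous_norm (fun x => mem_Ici.2 (norm_nonneg x))
  have hIntf : IntegrableOn (fun x : Euc 4 => ffun α C ρ ε ‖x‖) (Omega 4 α) := by
    have h1 : IntegrableOn (fun x : Euc 4 =>
        Wfun α C ε ‖x‖ * (Real.log (Wfun α C ε ‖x‖) - (Real.exp 1)⁻¹)) (Omega 4 α) :=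
      (hprofnormCont.continuousOn.integrableOn_compact (isCompact_closedBall 0 1)).mono_set hΩsub
    have h2 : (fun x : Euc 4 => ffun α C ρ ε ‖x‖)
        = (closedBall (0:Euc 4) (2*ρ)).indicator (fun x =>
            Wfun α C ε ‖x‖ * (Real.log (Wfun α C ε ‖x‖) - (Real.exp 1)⁻¹)) := by
      funext x
      unfold ffun
      by_cases h : ‖x‖ ≤ 2*ρ
      · rw [if_pos h, indicator_of_mem (by rwa [mem_closedBall_zero_iff])]
      · rw [if_neg h, indicator_of_notMem (by rwa [mem_closedBall_zero_iff])]
    rw [h2]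
    exact h1.indicator measurableSet_closedBall
  have hIntF : IntegrableOn (fun x : Euc 4 =>
      (φ x * bubbleFn 4 α ε x)^2 * Real.log ((φ x * bubbleFn 4 α ε x)^2)) (Omega 4 α) := by
    have hbubC : Continuous (bubbleFn 4 α ε) := by
      have he : bubbleFn 4 α ε
          = fun x : Euc 4 => C * ε * (ε^(α+2) + ‖x‖^(α+2)) ^ (-(2/(α+2))) :=
        funext (bubble_eq hα ε)
      rw [he]
      apply Continuous.mul continuous_const
      apply Continuous.rpow_const
      · exact continuous_const.add ((Real.continuous_rpow_const hb.le).comp continuous_norm)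
      · exact fun x => Or.inl (basepos hα hε0 (norm_nonneg x)).ne'
    have hsC : Continuous fun x : Euc 4 => (φ x * bubbleFn 4 α ε x)^2 :=
      (hφsmooth.continuous.mul hbubC).pow 2
    have hFc : Continuous fun x : Euc 4 =>
        (φ x * bubbleFn 4 α ε x)^2 * Real.log ((φ x * bubbleFn 4 α ε x)^2) :=
      Real.continuous_mul_log.comp hsC
    exact (hFc.continuousOn.integrableOn_compact (isCompact_closedBall 0 1)).mono_set hΩsub
  have hmono : ∫ x in Omega 4 α, ffun α C ρ ε ‖x‖
      ≤ ∫ x in Omega 4 α,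
          (φ x * bubbleFn 4 α ε x)^2 * Real.log ((φ x * bubbleFn 4 α ε x)^2) :=
    setIntegral_mono_on hIntf hIntF hΩmeas
      (fun x _ => pointwise_main hα hρ0 hε0 hC1 hεC hφ01 hφ1 hφ0 x)
  -- reduce to an integral over all of space
  have hstep2 : ∫ x in Omega 4 α, ffun α C ρ ε ‖x‖ = ∫ x : Euc 4, ffun α C ρ ε ‖x‖ := by
    have hae : Omega 4 α =ᵐ[volume] ball (0:Euc 4) 1 := by
      unfold Omega; split_ifs
      · rfl
      · exact diff_ae_eq_self.2 (measure_mono_null inter_subset_right (measure_singleton 0))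
    rw [setIntegral_congr_set hae]
    apply setIntegral_eq_integral_of_forall_compl_eq_zero
    intro x hx
    have h1 : 1 ≤ ‖x‖ := by
      have := hx
      rw [mem_ball_zero_iff] at this
      linarith [not_lt.1 this]
    have h2 : ¬ (‖x‖ ≤ 2*ρ) := by push_neg; linarith
    unfold ffun; rw [if_neg h2]
  -- polar coordinates
  have hstep3 : ∫ x : Euc 4, ffun α C ρ ε ‖x‖
      = omegaN 4 * ∫ y in Ioi (0:ℝ), y^3 * ffun α C ρ ε y := by
    rw [MeasureTheory.integral_fun_norm_addHaar volume (ffun α C ρ ε)]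
    simp only [finrank_euclideanSpace_fin, smul_eq_mul, nsmul_eq_mul]
    unfold omegaN
    norm_num [mul_assoc]
    exact Or.inl rfl
  -- restrict to (0, 2ρ]
  have hprof1d : IntegrableOn (fun y : ℝ =>
      y^3 * (Wfun α C ε y * (Real.log (Wfun α C ε y) - (Real.exp 1)⁻¹))) (Ioc 0 (2*ρ)) := by
    have hc : ContinuousOn (fun y : ℝ =>
        y^3 * (Wfun α C ε y * (Real.log (Wfun α C ε y) - (Real.exp 1)⁻¹))) (Icc 0 (2*ρ)) :=
      ((continuous_pow 3).continuousOn).mul ((profCont hα hC0 hε0).mono (Icc_subset_Ici_self))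
    exact (hc.integrableOn_compact isCompact_Icc).mono_set Ioc_subset_Icc_self
  have heq1 : EqOn (fun y : ℝ => y^3 * ffun α C ρ ε y)
      (fun y : ℝ => y^3 * (Wfun α C ε y * (Real.log (Wfun α C ε y) - (Real.exp 1)⁻¹)))
      (Ioc 0 (2*ρ)) := by
    intro y hy
    have h : ffun α C ρ ε y
        = Wfun α C ε y * (Real.log (Wfun α C ε y) - (Real.exp 1)⁻¹) := by
      unfold ffun; rw [if_pos hy.2]
    simp only [h]
  have hstep4 : ∫ y in Ioi (0:ℝ), y^3 * ffun α C ρ ε y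
      = ∫ y in (0:ℝ)..(2*ρ), y^3 * (Wfun α C ε y * (Real.log (Wfun α C ε y) - (Real.exp 1)⁻¹)) := by
    have hsplit : Ioc (0:ℝ) (2*ρ) ∪ Ioi (2*ρ) = Ioi 0 := Ioc_union_Ioi_eq_Ioi (by linarith)
    have heq2 : EqOn (fun y : ℝ => y^3 * ffun α C ρ ε y) (fun _ => (0:ℝ)) (Ioi (2*ρ)) := by
      intro y hy
      have h : ffun α C ρ ε y = 0 := by
        unfold ffun; rw [if_neg (not_le.2 hy)]
      simp only [h, mul_zero]
    have hint1 : IntegrableOn (fun y : ℝ => y^3 * ffun α C ρ ε y) (Ioc 0 (2*ρ)) :=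
      hprof1d.congr_fun heq1.symm measurableSet_Ioc
    have hint2 : IntegrableOn (fun y : ℝ => y^3 * ffun α C ρ ε y) (Ioi (2*ρ)) :=
      integrableOn_zero.congr_fun (fun y hy => (heq2 hy).symm) measurableSet_Ioi
    rw [← hsplit, setIntegral_union (Ioc_disjoint_Ioi le_rfl) measurableSet_Ioi hint1 hint2]
    rw [setIntegral_congr_fun measurableSet_Ioi heq2, integral_zero, add_zero]
    rw [setIntegral_congr_fun measurableSet_Ioc heq1]
    rw [intervalIntegral.integral_of_le (by linarith : (0:ℝ) ≤ 2*ρ)]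
  -- the 1-d lower bound and final algebra
  have honed := oneD (C := C) hα hC1 hρ0 hρ1 hε0 hε2ρ hεe
  have halg := finalAlg (α+2) C ρ (Real.log (1/ε)) hC1 hρ0 hL₁
  rw [← hc₃def] at halg
  have hcε : (0:ℝ) ≤ C^2 * ε^2 := by positivity
  have hchain : C^2*ε^2 * (Real.log (C^2 * ρ^2 * Real.exp (-8/(α+2)^2) / (2*ρ)^4)
        * Real.log (1/ε) - (1 + |c₃|))
      ≤ ∫ y in (0:ℝ)..(2*ρ),
          y^3 * (Wfun α C ε y * (Real.log (Wfun α C ε y) - (Real.exp 1)⁻¹)) :=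
    le_trans (mul_le_mul_of_nonneg_left halg hcε) honed
  have hfinal : omegaN 4 * (C^2*ε^2 * (Real.log (C^2 * ρ^2 * Real.exp (-8/(α+2)^2) / (2*ρ)^4)
        * Real.log (1/ε) - (1 + |c₃|)))
      ≤ ∫ x in Omega 4 α,
          (φ x * bubbleFn 4 α ε x)^2 * Real.log ((φ x * bubbleFn 4 α ε x)^2) := by
    calc omegaN 4 * (C^2*ε^2 * (Real.log (C^2 * ρ^2 * Real.exp (-8/(α+2)^2) / (2*ρ)^4)
        * Real.log (1/ε) - (1 + |c₃|)))
        ≤ omegaN 4 * ∫ y in (0:ℝ)..(2*ρ),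
            y^3 * (Wfun α C ε y * (Real.log (Wfun α C ε y) - (Real.exp 1)⁻¹)) :=
          mul_le_mul_of_nonneg_left hchain hω.le
      _ = ∫ x in Omega 4 α, ffun α C ρ ε ‖x‖ := by rw [hstep2, hstep3, hstep4]
      _ ≤ _ := hmono
  have hexp : (2+α)^2 = (α+2)^2 := by ring
  rw [hexp]
  calc C ^ 2 * omegaN 4 * Real.log (C ^ 2 * ρ ^ 2 * Real.exp (-8 / (α+2) ^ 2) / (2 * ρ) ^ 4)
        * ε ^ 2 * Real.log (1 / ε) - C^2 * omegaN 4 * (1 + |c₃|) * ε ^ 2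
      = omegaN 4 * (C^2*ε^2 * (Real.log (C^2 * ρ^2 * Real.exp (-8/(α+2)^2) / (2*ρ)^4)
          * Real.log (1/ε) - (1 + |c₃|))) := by ring
    _ ≤ _ := hfinal
end

section
/- Let β > 0 and 0 < m ≤ M be real numbers. Then there exists B₁ > 0 such that for all x ∈ [m, M] and all y ≥ 0: (x+y)²·log((x+y)²) − x²·log(x²) − 2xy·(log(x²) + 1) ≤ y^{2+β} + B₁·y². -/
/-- the logarithmic expansion inequality
`g(x,y) = (x+y)² log (x+y)² − x² log x² − 2xy(log x² + 1) ≤ y^{2+β} + B₁ y²`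
uniformly for `x ∈ [m, M]` and `y ≥ 0`. -/
theorem statement17 (β m M : ℝ) (hβ : 0 < β) (hm : 0 < m) (hmM : m ≤ M) :
    ∃ B₁ > (0 : ℝ), ∀ x ∈ Set.Icc m M, ∀ y : ℝ, 0 ≤ y →
      (x + y) ^ 2 * Real.log ((x + y) ^ 2) - x ^ 2 * Real.log (x ^ 2) -
          2 * x * y * (Real.log (x ^ 2) + 1) ≤
        y ^ (2 + β) + B₁ * y ^ 2 := by
  have hM : 0 < M := lt_of_lt_of_le hm hmM
  set b : ℝ := β / 2 with hbdef
  have hb0 : 0 < b := by positivity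
  set B : ℝ := (4 / β) * (2 : ℝ) ^ b with hBdef
  have hB0 : 0 < B := by
    have : (0:ℝ) < (2:ℝ) ^ b := Real.rpow_pos_of_pos (by norm_num) b
    positivity
  refine ⟨B * M ^ b + B ^ 2 / 4 + 4, ?_, ?_⟩
  · have : (0:ℝ) < M ^ b := Real.rpow_pos_of_pos hM b
    positivity
  intro x hx y hy
  rcases hy.eq_or_lt with rfl | hy0
  · simp [Real.zero_rpow (show (2:ℝ) + β ≠ 0 by positivity)]
  have hx0 : 0 < x := lt_of_lt_of_le hm hx.1
  have hxy : 0 < x + y := by linarith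
  have hMy : 0 < M + y := by linarith
  have hlog1 : Real.log ((x + y) ^ 2) = 2 * Real.log (x + y) := by
    rw [Real.log_pow]; push_cast; ring
  have hlog2 : Real.log (x ^ 2) = 2 * Real.log x := by
    rw [Real.log_pow]; push_cast; ring
  -- first order expansion bound
  have h1 : Real.log (x + y) - Real.log x ≤ y / x := by
    rw [← Real.log_div (ne_of_gt hxy) (ne_of_gt hx0)]
    have h := Real.log_le_sub_one_of_pos (show 0 < (x + y) / x by positivity)
    have heq : (x + y) / x - 1 = y / x := by field_simp; ring
    linarith
  -- logarithm growth bound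
  have h2 : 2 * Real.log (x + y) ≤ y ^ β + (B * M ^ b + B ^ 2 / 4) := by
    have lmono : Real.log (x + y) ≤ Real.log (M + y) := by
      apply Real.log_le_log hxy; linarith [hx.2]
    have l1 : Real.log (M + y) ≤ (2 / β) * (M + y) ^ b := by
      have h := Real.log_le_sub_one_of_pos (Real.rpow_pos_of_pos hMy b)
      rw [Real.log_rpow hMy] at h
      have : b * Real.log (M + y) ≤ (M + y) ^ b := by linarith
      calc Real.log (M + y) = (1 / b) * (b * Real.log (M + y)) := by
            field_simp
        _ ≤ (1 / b) * (M + y) ^ b := by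
            apply mul_le_mul_of_nonneg_left this (by positivity)
        _ = (2 / β) * (M + y) ^ b := by rw [hbdef]; ring
    have l2 : (M + y) ^ b ≤ (2:ℝ) ^ b * (M ^ b + y ^ b) := by
      have hmax : M + y ≤ 2 * max M y := by
        rcases le_total M y with h | h <;> simp [max_eq_right, max_eq_left, h] <;> linarith
      have hmax0 : 0 ≤ max M y := le_trans hM.le (le_max_left _ _)
      calc (M + y) ^ b ≤ (2 * max M y) ^ b :=
            Real.rpow_le_rpow hMy.le hmax hb0.le
        _ = (2:ℝ) ^ b * (max M y) ^ b := Real.mul_rpow (by norm_num) hmax0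
        _ ≤ (2:ℝ) ^ b * (M ^ b + y ^ b) := by
            apply mul_le_mul_of_nonneg_left _ (Real.rpow_nonneg (by norm_num) b)
            rcases max_cases M y with ⟨he, _⟩ | ⟨he, _⟩ <;> rw [he]
            · nlinarith [Real.rpow_nonneg (le_of_lt hy0) b]
            · nlinarith [Real.rpow_nonneg hM.le b]
      
    have l3 : 2 * Real.log (x + y) ≤ B * M ^ b + B * y ^ b := by
      have : 2 * Real.log (x + y) ≤ 2 * ((2 / β) * (M + y) ^ b) := by
        have := lmono.trans l1; linarith
      calc 2 * Real.log (x + y) ≤ 2 * ((2 / β) * (M + y) ^ b) := this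
        _ = (4 / β) * (M + y) ^ b := by ring
        _ ≤ (4 / β) * ((2:ℝ) ^ b * (M ^ b + y ^ b)) := by
            apply mul_le_mul_of_nonneg_left l2 (by positivity)
        _ = B * M ^ b + B * y ^ b := by rw [hBdef]; ring
    have l4 : B * y ^ b ≤ y ^ β + B ^ 2 / 4 := by
      have hyb : y ^ b * y ^ b = y ^ β := by
        rw [← Real.rpow_add hy0]; congr 1; rw [hbdef]; ring
      nlinarith [sq_nonneg (y ^ b - B / 2)]
    linarith
  -- assemble
  have hy2 : y ^ (2 + β) = y ^ 2 * y ^ β := by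
    rw [Real.rpow_add hy0]
    congr 1
    rw [show (2:ℝ) = ((2:ℕ):ℝ) by norm_num, Real.rpow_natCast]
  rw [hlog1, hlog2, hy2]
  have p1 : 2 * (x ^ 2 + 2 * x * y) * (Real.log (x + y) - Real.log x)
      ≤ 2 * x * y + 4 * y ^ 2 := by
    have hpos : (0:ℝ) ≤ 2 * (x ^ 2 + 2 * x * y) := by nlinarith
    have := mul_le_mul_of_nonneg_left h1 hpos
    have heq : 2 * (x ^ 2 + 2 * x * y) * (y / x) = 2 * x * y + 4 * y ^ 2 := by
      field_simp; ring
    linarith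
  have p2 : y ^ 2 * (2 * Real.log (x + y)) ≤ y ^ 2 * (y ^ β + (B * M ^ b + B ^ 2 / 4)) :=
    mul_le_mul_of_nonneg_left h2 (by positivity)
  nlinarith [p1, p2]
end

section
/- Let p > 2 and 0 < m ≤ M be real numbers, and define f(p,x,y) := (x+y)^p − x^p − y^p − p·x^{p−1}·y. Then there exists B₂ > 0 such that for all x ∈ [m, M] and all y ≥ 0: |f(p,x,y)| ≤ (p²/2)·M^{p−2}·y² + B₂·M·y^{p−1}; and if moreover p > 3, then f(p,x,y) ≥ (p/2)·m·y^{p−1} − B₂·y² for all x ∈ [m, M] and y ≥ 0. -/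
open Real Set

private lemma st18_bern {a b p : ℝ} (ha : 0 < a) (hb : 0 ≤ b) (hp : 1 ≤ p) :
    a ^ p + p * a ^ (p - 1) * b ≤ (a + b) ^ p := by
  have hs : (-1 : ℝ) ≤ b / a := le_trans (by norm_num) (div_nonneg hb ha.le)
  have h := one_add_mul_self_le_rpow_one_add hs hp
  have hmul : (1 + b / a) ^ p * a ^ p = (a + b) ^ p := by
    rw [← Real.mul_rpow (by positivity) ha.le]
    congr 1
    field_simp
  have hap : (0:ℝ) < a ^ p := Real.rpow_pos_of_pos ha p
  have key : (1 + p * (b / a)) * a ^ p ≤ (a + b) ^ p := by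
    rw [← hmul]
    exact mul_le_mul_of_nonneg_right h hap.le
  have hdiv : a ^ (p - 1) = a ^ p / a := Real.rpow_sub_one ha.ne' p
  have heq : (1 + p * (b / a)) * a ^ p = a ^ p + p * a ^ (p - 1) * b := by
    rw [hdiv]; field_simp
  linarith [key, heq.ge]

private lemma st18_tangent {a u q : ℝ} (ha : 0 < a) (hau : a ≤ u) (hq : 1 ≤ q) :
    u ^ q - a ^ q ≤ q * u ^ (q - 1) * (u - a) := by
  have hu : 0 < u := lt_of_lt_of_le ha hau
  have hs : (-1:ℝ) ≤ (a - u) / u := by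
    rw [le_div_iff₀ hu]; linarith
  have h := one_add_mul_self_le_rpow_one_add hs hq
  have h1 : 1 + (a - u) / u = a / u := by field_simp; ring
  rw [h1, Real.div_rpow ha.le hu.le] at h
  have huq : (0:ℝ) < u ^ q := Real.rpow_pos_of_pos hu q
  have key := mul_le_mul_of_nonneg_right h huq.le
  rw [div_mul_cancel₀ _ huq.ne'] at key
  have hd : u ^ (q-1) = u ^ q / u := Real.rpow_sub_one hu.ne' q
  have heq : (1 + q * ((a - u) / u)) * u ^ q = u ^ q + q * u ^ (q-1) * (a - u) := by
    rw [hd]; field_simp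
  linarith [key, heq.ge]

private lemma st18_taylor2 {a b p : ℝ} (ha : 0 < a) (hb : 0 ≤ b) (hp : 2 ≤ p) :
    (a + b) ^ p ≤ a ^ p + p * a ^ (p - 1) * b + p * (p - 1) / 2 * (a + b) ^ (p - 2) * b ^ 2 := by
  set K := (a + b) ^ (p - 2) with hK
  set F : ℝ → ℝ := fun t => p * (p-1)/2 * K * t ^ 2 + a ^ p + p * a ^ (p-1) * t - (a + t) ^ p
    with hF
  have hderiv : ∀ t ∈ Set.Icc (0:ℝ) b,
      HasDerivAt F (p*(p-1)/2*K*(2*t) + p*a^(p-1) - p*(a+t)^(p-1)*1) t := by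
    intro t ht
    have hat : (0:ℝ) < a + t := by have := ht.1; linarith
    have h1 : HasDerivAt (fun t : ℝ => (a + t) ^ p) (p * (a + t) ^ (p - 1) * 1) t :=
      (Real.hasDerivAt_rpow_const (Or.inl hat.ne')).comp t ((hasDerivAt_id t).const_add a)
    have h2 : HasDerivAt (fun t : ℝ => p*(p-1)/2*K*t^2) (p*(p-1)/2*K*(2*t)) t := by
      simpa [mul_comm] using (hasDerivAt_pow 2 t).const_mul (p*(p-1)/2*K)
    have h3 : HasDerivAt (fun t : ℝ => p * a^(p-1) * t) (p * a^(p-1)) t := by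
      simpa using (hasDerivAt_id t).const_mul (p * a^(p-1))
    exact ((h2.add_const (a^p)).add h3).sub h1
  have hcont : ContinuousOn F (Set.Icc 0 b) :=
    fun t ht => ((hderiv t ht).continuousAt).continuousWithinAt
  have hmono : MonotoneOn F (Set.Icc 0 b) := by
    apply monotoneOn_of_deriv_nonneg (convex_Icc 0 b) hcont
    · intro t ht
      rw [interior_Icc] at ht
      exact ((hderiv t (Set.mem_Icc_of_Ioo ht)).differentiableAt).differentiableWithinAt
    · intro t ht
      rw [interior_Icc] at ht
      rw [(hderiv t (Set.mem_Icc_of_Ioo ht)).deriv]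
      have ht0 : 0 < t := ht.1
      have htb : t ≤ b := ht.2.le
      have htan := st18_tangent (q := p - 1) ha (by linarith : a ≤ a + t) (by linarith)
      have hsub : p - 1 - 1 = p - 2 := by ring
      rw [hsub, show a + t - a = t by ring] at htan
      have hKle : (a + t) ^ (p-2) ≤ K := by
        rw [hK]
        exact Real.rpow_le_rpow (by linarith) (by linarith) (by linarith)
      have hmul := mul_le_mul_of_nonneg_right
        (mul_le_mul_of_nonneg_left hKle (by linarith : (0:ℝ) ≤ p - 1)) ht0.le
      nlinarith [htan, hmul]
  have h0b := hmono (Set.left_mem_Icc.2 hb) (Set.right_mem_Icc.2 hb) hb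
  have hF0 : F 0 = 0 := by simp [hF]
  have hFb : F b = p * (p-1)/2 * K * b ^ 2 + a ^ p + p * a ^ (p-1) * b - (a + b) ^ p := rfl
  rw [hF0, hFb] at h0b
  linarith


set_option maxHeartbeats 2000000 in
/-- the expansion inequalities for
`f(p,x,y) = (x+y)^p − x^p − y^p − p x^{p−1} y`, uniformly for `x ∈ [m, M]` and `y ≥ 0`. -/
theorem statement18 (p m M : ℝ) (hp : 2 < p) (hm : 0 < m) (hmM : m ≤ M) :
    ∃ B₂ > (0 : ℝ),
      (∀ x ∈ Set.Icc m M, ∀ y : ℝ, 0 ≤ y →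
        |(x + y) ^ p - x ^ p - y ^ p - p * x ^ (p - 1) * y| ≤
          (p ^ 2 / 2) * M ^ (p - 2) * y ^ 2 + B₂ * M * y ^ (p - 1)) ∧
      (3 < p → ∀ x ∈ Set.Icc m M, ∀ y : ℝ, 0 ≤ y →
        (p / 2) * m * y ^ (p - 1) - B₂ * y ^ 2 ≤
          (x + y) ^ p - x ^ p - y ^ p - p * x ^ (p - 1) * y) := by
  have hM : 0 < M := lt_of_lt_of_le hm hmM
  have hp0 : 0 < p := by linarith
  have hp1 : (1:ℝ) ≤ p - 1 := by linarith
  have hp2 : (0:ℝ) < p - 2 := by linarith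
  obtain ⟨ε, hεpos, hεpow⟩ : ∃ e : ℝ, 0 < e ∧ (1+e)^(p-2) = p/(p-1) := by
    have hbase : (1:ℝ) < p/(p-1) := by
      rw [lt_div_iff₀ (by linarith)]; linarith
    refine ⟨(p/(p-1))^((p-2)⁻¹) - 1, ?_, ?_⟩
    · have h1 : 1 < (p/(p-1))^((p-2)⁻¹) :=
        (Real.one_lt_rpow_iff_of_pos (by positivity)).2 (Or.inl ⟨hbase, by positivity⟩)
      linarith
    · rw [show 1 + ((p/(p-1))^((p-2)⁻¹) - 1) = (p/(p-1))^((p-2)⁻¹) by ring,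
        ← Real.rpow_mul (by positivity), inv_mul_cancel₀ hp2.ne', Real.rpow_one]
  obtain ⟨C1, hC1def⟩ : ∃ c : ℝ, c = p*(p-1)/2*(1+1/ε)^(p-2)*(1/ε) := ⟨_, rfl⟩
  have h1εp : (0:ℝ) ≤ (1+1/ε)^(p-2) := Real.rpow_nonneg (by positivity) _
  have hC1 : 0 ≤ C1 := by
    rw [hC1def]
    have h2 : (0:ℝ) ≤ p*(p-1)/2 := by nlinarith
    have h3 : (0:ℝ) ≤ 1/ε := by positivity
    exact mul_nonneg (mul_nonneg h2 h1εp) h3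
  have hεpm : (0:ℝ) < ε^(1-p) := Real.rpow_pos_of_pos hεpos _
  have hεpm2 : (0:ℝ) < ε^(2-p) := Real.rpow_pos_of_pos hεpos _
  have hMp : (0:ℝ) < M^p := Real.rpow_pos_of_pos hM _
  have hMp1 : (0:ℝ) < M^(p-1) := Real.rpow_pos_of_pos hM _
  have hMp2 : (0:ℝ) < M^(p-2) := Real.rpow_pos_of_pos hM _
  obtain ⟨B₂, hB₂pos, hB1, hB2, hB3, hB4⟩ :
      ∃ B : ℝ, 0 < B ∧ ε ≤ B ∧ C1 + p + ε^(1-p) + p*ε^(2-p) ≤ B ∧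
        (p/2)*m + 1 ≤ B ∧ M^p + p*M^(p-1) ≤ B := by
    refine ⟨ε + (C1 + p + ε^(1-p) + p*ε^(2-p)) + ((p/2)*m + 1) + (M^p + p*M^(p-1)),
      ?_, ?_, ?_, ?_, ?_⟩ <;>
      linarith [mul_pos hp0 hm, mul_pos hp0 hεpm2, mul_pos hp0 hMp1, hC1, hεpos,
        hεpm, hMp, hp0]
  refine ⟨B₂, hB₂pos, ?_, ?_⟩
  · -- first inequality
    intro x hx y hy
    obtain ⟨hmx, hxM⟩ := hx
    have hx0 : 0 < x := lt_of_lt_of_le hm hmx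
    have hyp1 : (0:ℝ) ≤ y^(p-1) := Real.rpow_nonneg hy _
    have hxp1 : (0:ℝ) ≤ x^(p-1) := Real.rpow_nonneg hx0.le _
    have hxp : (0:ℝ) ≤ x^p := Real.rpow_nonneg hx0.le _
    have hrhs2 : (0:ℝ) ≤ p^2/2 * M^(p-2) * y^2 := by positivity
    rcases le_total y (ε*M) with hcase | hcase
    · -- small y : |T - y^p| ≤ T + y^p
      have hT0 : x ^ p + p * x ^ (p - 1) * y ≤ (x + y) ^ p := st18_bern hx0 hy (by linarith)
      have hTle := st18_taylor2 (a := x) (b := y) hx0 hy hp.le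
      -- (x+y)^(p-2) ≤ (p/(p-1)) * M^(p-2)
      have h1 : (x+y)^(p-2) ≤ (p/(p-1)) * M^(p-2) := by
        calc (x+y)^(p-2) ≤ ((1+ε)*M)^(p-2) :=
              Real.rpow_le_rpow (by positivity) (by nlinarith [hcase, hxM]) hp2.le
          _ = (1+ε)^(p-2) * M^(p-2) := Real.mul_rpow (by positivity) hM.le
          _ = (p/(p-1)) * M^(p-2) := by rw [hεpow]
      have hT2 : (x + y) ^ p - x ^ p - p * x ^ (p - 1) * y ≤ p^2/2 * M^(p-2) * y^2 := by
        have hcoef : p*(p-1)/2 * ((p/(p-1)) * M^(p-2)) = p^2/2 * M^(p-2) := by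
          field_simp
        have hh : p*(p-1)/2 * (x+y)^(p-2) * y^2 ≤ p^2/2 * M^(p-2) * y^2 := by
          rw [← hcoef, mul_assoc (p*(p-1)/2), mul_assoc (p*(p-1)/2)]
          refine mul_le_mul_of_nonneg_left ?_ (by nlinarith)
          exact mul_le_mul_of_nonneg_right h1 (sq_nonneg y)
        linarith
      -- y^p ≤ ε*M*y^(p-1)
      have hyp : y^p ≤ ε*M*y^(p-1) := by
        rcases eq_or_lt_of_le hy with rfl | hy0
        · rw [Real.zero_rpow hp0.ne', Real.zero_rpow (by linarith : p - 1 ≠ 0)]; simp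
        · have : y^p = y^(p-1) * y := by
            rw [← Real.rpow_add_one hy0.ne']; congr 1; ring
          rw [this]
          calc y^(p-1) * y ≤ y^(p-1) * (ε*M) := mul_le_mul_of_nonneg_left hcase hyp1
            _ = ε*M*y^(p-1) := by ring
      have hyp0 : (0:ℝ) ≤ y^p := Real.rpow_nonneg hy _
      have hεB : ε*M*y^(p-1) ≤ B₂*M*y^(p-1) := by
        exact mul_le_mul_of_nonneg_right (mul_le_mul_of_nonneg_right hB1 hM.le) hyp1
      have hBMy : (0:ℝ) ≤ B₂*M*y^(p-1) :=
        mul_nonneg (mul_nonneg hB₂pos.le hM.le) hyp1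
      rw [abs_le]
      exact ⟨by linarith [hT0, hyp, hεB, hrhs2], by linarith [hT2, hyp0, hBMy]⟩
    · -- large y
      have hy0 : 0 < y := lt_of_lt_of_le (by positivity) hcase
      have hyp2 : y^(p-2) * y = y^(p-1) := by
        rw [← Real.rpow_add_one hy0.ne']; congr 1; ring
      have hyMp1 : ε^(p-1) * M^(p-1) ≤ y^(p-1) := by
        rw [← Real.mul_rpow hεpos.le hM.le]
        exact Real.rpow_le_rpow (by positivity) hcase (by linarith)
      have hyMp2 : ε^(p-2) * M^(p-2) ≤ y^(p-2) := by
        rw [← Real.mul_rpow hεpos.le hM.le]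
        exact Real.rpow_le_rpow (by positivity) hcase hp2.le
      have hinv1 : ε^(1-p) * ε^(p-1) = 1 := by
        rw [← Real.rpow_add hεpos]; norm_num
      have hinv2 : ε^(2-p) * ε^(p-2) = 1 := by
        rw [← Real.rpow_add hεpos]; norm_num
      have hεp1 : (0:ℝ) < ε^(p-1) := Real.rpow_pos_of_pos hεpos _
      have hεp2 : (0:ℝ) < ε^(p-2) := Real.rpow_pos_of_pos hεpos _
      -- T' bounds with base y
      have hT'0 : y ^ p + p * y ^ (p - 1) * x ≤ (y + x) ^ p := st18_bern hy0 hx0.le (by linarith)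
      have hT'le := st18_taylor2 (a := y) (b := x) hy0 hx0.le hp.le
      rw [add_comm y x] at hT'0 hT'le
      have hyM : M ≤ y / ε := (le_div_iff₀ hεpos).2 (by nlinarith)
      have hxyε : x + y ≤ (1+1/ε) * y := by
        have h := hxM.trans hyM
        have : (1+1/ε)*y = y + y/ε := by field_simp
        linarith
      have hxy2 : (x+y)^(p-2) ≤ (1+1/ε)^(p-2) * y^(p-2) := by
        rw [← Real.mul_rpow (by positivity) hy0.le]
        exact Real.rpow_le_rpow (by positivity) hxyε hp2.le
      -- b1 : Taylor remainder bound
      have hyp2' : (0:ℝ) ≤ y^(p-2) := Real.rpow_nonneg hy _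
      have hx2 : x^2 ≤ M * (y/ε) := by
        have h2 := mul_le_mul hxM (hxM.trans hyM) hx0.le hM.le
        nlinarith [h2]
      have b1 : p*(p-1)/2 * (x+y)^(p-2) * x^2 ≤ C1 * (M * y^(p-1)) := by
        have hpp : (0:ℝ) ≤ p*(p-1)/2 := by nlinarith
        calc p*(p-1)/2 * (x+y)^(p-2) * x^2
            ≤ p*(p-1)/2 * ((1+1/ε)^(p-2) * y^(p-2)) * (M * (y/ε)) := by
              refine mul_le_mul ?_ hx2 (sq_nonneg x) (by positivity)
              exact mul_le_mul_of_nonneg_left hxy2 hpp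
          _ = C1 * (M * (y^(p-2) * y)) := by rw [hC1def]; field_simp
          _ = C1 * (M * y^(p-1)) := by rw [hyp2]
      -- b2
      have b2 : p * x * y^(p-1) ≤ p * (M * y^(p-1)) := by
        rw [mul_assoc]
        refine mul_le_mul_of_nonneg_left ?_ hp0.le
        exact mul_le_mul_of_nonneg_right hxM hyp1
      -- b3 : x^p ≤ ε^(1-p) * (M * y^(p-1))
      have hMyp1 : M^(p-1) ≤ ε^(1-p) * y^(p-1) := by
        have h := mul_le_mul_of_nonneg_left hyMp1 hεpm.le
        calc M^(p-1) = ε^(1-p) * ε^(p-1) * M^(p-1) := by rw [hinv1]; ring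
          _ = ε^(1-p) * (ε^(p-1) * M^(p-1)) := by ring
          _ ≤ ε^(1-p) * y^(p-1) := h
      have b3 : x^p ≤ ε^(1-p) * (M * y^(p-1)) := by
        have h1 : x^p ≤ M^p := Real.rpow_le_rpow hx0.le hxM hp0.le
        have h2 : M^p = M^(p-1) * M := by
          nth_rewrite 1 [show p = (p-1)+1 by ring]
          exact Real.rpow_add_one hM.ne' (p-1)
        have h4 := mul_le_mul_of_nonneg_right hMyp1 hM.le
        rw [h2] at h1
        linarith [h1, h4]
      -- b4 : p * x^(p-1) * y ≤ p*ε^(2-p) * (M * y^(p-1))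
      have hMyp2 : M^(p-2) ≤ ε^(2-p) * y^(p-2) := by
        have h := mul_le_mul_of_nonneg_left hyMp2 hεpm2.le
        calc M^(p-2) = ε^(2-p) * ε^(p-2) * M^(p-2) := by rw [hinv2]; ring
          _ = ε^(2-p) * (ε^(p-2) * M^(p-2)) := by ring
          _ ≤ ε^(2-p) * y^(p-2) := h
      have b4 : p * x^(p-1) * y ≤ p*ε^(2-p) * (M * y^(p-1)) := by
        have h1 : x^(p-1) ≤ M^(p-1) := Real.rpow_le_rpow hx0.le hxM (by linarith)
        have h2 : M^(p-1) = M^(p-2) * M := by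
          rw [← Real.rpow_add_one hM.ne']; congr 1; ring
        calc p * x^(p-1) * y ≤ p * M^(p-1) * y := by
              refine mul_le_mul_of_nonneg_right (mul_le_mul_of_nonneg_left h1 hp0.le) hy0.le
          _ = p * M * (M^(p-2) * y) := by rw [h2]; ring
          _ ≤ p * M * (ε^(2-p) * y^(p-2) * y) := by
              refine mul_le_mul_of_nonneg_left ?_ (by positivity)
              exact mul_le_mul_of_nonneg_right hMyp2 hy0.le
          _ = p*ε^(2-p) * (M * (y^(p-2)*y)) := by ring
          _ = p*ε^(2-p) * (M * y^(p-1)) := by rw [hyp2]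
      have hMY : (0:ℝ) ≤ M * y^(p-1) := by positivity
      have hsum : C1 + p + ε^(1-p) + p*ε^(2-p) ≤ B₂ := hB2
      have hBY : (C1 + p + ε^(1-p) + p*ε^(2-p)) * (M * y^(p-1)) ≤ B₂ * M * y^(p-1) := by
        rw [mul_assoc]
        exact mul_le_mul_of_nonneg_right hsum hMY
      rw [abs_le]
      constructor
      · linarith [hT'0, b3, b4, hBY, hrhs2,
          mul_nonneg (mul_nonneg hp0.le hyp1) hx0.le,
          mul_nonneg hC1 hMY, mul_nonneg hp0.le hMY]
      · linarith [hT'le, b1, b2, hBY, hrhs2, hxp,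
          mul_nonneg (mul_nonneg hp0.le hxp1) hy0.le,
          mul_nonneg hεpm.le hMY, mul_nonneg (mul_nonneg hp0.le hεpm2.le) hMY]
  · -- second inequality
    intro hp3 x hx y hy
    obtain ⟨hmx, hxM⟩ := hx
    have hx0 : 0 < x := lt_of_lt_of_le hm hmx
    have hyp1 : (0:ℝ) ≤ y^(p-1) := Real.rpow_nonneg hy _
    rcases le_total y 1 with hcase | hcase
    · -- small y
      have hT0 : x ^ p + p * x ^ (p - 1) * y ≤ (x + y) ^ p := st18_bern hx0 hy (by linarith)
      have hyp : y^p ≤ y^2 := by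
        rcases eq_or_lt_of_le hy with rfl | hy0
        · rw [Real.zero_rpow hp0.ne']; positivity
        · calc y^p ≤ y^((2:ℕ):ℝ) := Real.rpow_le_rpow_of_exponent_ge hy0 hcase (by push_cast; linarith)
            _ = y^(2:ℕ) := Real.rpow_natCast y 2
      have hyp1' : y^(p-1) ≤ y^2 := by
        rcases eq_or_lt_of_le hy with rfl | hy0
        · rw [Real.zero_rpow (by linarith : p - 1 ≠ 0)]; positivity
        · calc y^(p-1) ≤ y^((2:ℕ):ℝ) :=
              Real.rpow_le_rpow_of_exponent_ge hy0 hcase (by push_cast; linarith)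
            _ = y^(2:ℕ) := Real.rpow_natCast y 2
      have hB : (p/2)*m + 1 ≤ B₂ := hB3
      have h1 : (p/2)*m*y^(p-1) ≤ (p/2)*m*y^2 := by
        refine mul_le_mul_of_nonneg_left hyp1' (by positivity)
      linarith [hT0, hyp, h1, sq_nonneg y,
        mul_nonneg (sub_nonneg.2 hB) (sq_nonneg y)]
    · -- y ≥ 1
      have hy0 : 0 < y := by linarith
      have hT'0 : y ^ p + p * y ^ (p - 1) * x ≤ (y + x) ^ p := st18_bern hy0 hx0.le (by linarith)
      rw [add_comm y x] at hT'0
      have hxp : x^p ≤ M^p := Real.rpow_le_rpow hx0.le hxM hp0.le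
      have hxp1 : x^(p-1) ≤ M^(p-1) := Real.rpow_le_rpow hx0.le hxM (by linarith)
      have hy2 : y ≤ y^2 := by nlinarith
      have h12 : (1:ℝ) ≤ y^2 := by nlinarith
      have hB : M^p + p*M^(p-1) ≤ B₂ := hB4
      have hxm : p * m * y^(p-1) ≤ p * x * y^(p-1) := by
        refine mul_le_mul_of_nonneg_right (mul_le_mul_of_nonneg_left hmx hp0.le) hyp1
      -- x^p ≤ M^p * y^2 ;  p x^{p-1} y ≤ p M^{p-1} y^2
      have c3 : x^p ≤ M^p * y^2 := hxp.trans (le_mul_of_one_le_right hMp.le h12)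
      have c4 : p * x^(p-1) * y ≤ p * M^(p-1) * y^2 := by
        calc p * x^(p-1) * y ≤ p * M^(p-1) * y :=
              mul_le_mul_of_nonneg_right (mul_le_mul_of_nonneg_left hxp1 hp0.le) hy0.le
          _ ≤ p * M^(p-1) * y^2 := mul_le_mul_of_nonneg_left hy2 (by positivity)
      linarith [hT'0, hxm, c3, c4,
        mul_nonneg (mul_nonneg hp0.le hm.le) hyp1,
        mul_nonneg (sub_nonneg.2 hB) (sq_nonneg y)]
end
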